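/- Let m ≥ 1, let A, B ∈ ℙ_m with det A = α and det B = β (so α, β are positive reals), and let t ∈ (0,1). If A^{-1} ∼ B, then A ♮_t B = [ (α β)^{3t/m} / det((α β)^{1/m} I + A B)^{2t/m} ] · (A^{-1} + (α β)^{-1/m} B)^t A (A^{-1} + (α β)^{-1/m} B)^t. (Here det((α β)^{1/m} I + A B) is a positive real number, since the eigenvalues of A B are positive, and real powers of it are taken in ℝ.) -/

import Mathlib

open Matrix
open scoped ComplexOrder

/-- Real power `A^t = exp(t · log A)` of a Hermitian positive definite matrix, defined via
the functional calculus (spectral decomposition). -/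
noncomputable def mpow {n : ℕ} (A : Matrix (Fin n) (Fin n) ℂ) (t : ℝ) :
    Matrix (Fin n) (Fin n) ℂ :=
  if hA : A.IsHermitian then
    (hA.eigenvectorUnitary : Matrix (Fin n) (Fin n) ℂ) *
      Matrix.diagonal (fun i => ((hA.eigenvalues i ^ t : ℝ) : ℂ)) *
      (star (hA.eigenvectorUnitary : Matrix (Fin n) (Fin n) ℂ))
  else A

/-- Logarithm of a Hermitian positive definite matrix via the functional calculus. -/
noncomputable def mlog {n : ℕ} (A : Matrix (Fin n) (Fin n) ℂ) : Matrix (Fin n) (Fin n) ℂ :=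
  if hA : A.IsHermitian then
    (hA.eigenvectorUnitary : Matrix (Fin n) (Fin n) ℂ) *
      Matrix.diagonal (fun i => ((Real.log (hA.eigenvalues i) : ℝ) : ℂ)) *
      (star (hA.eigenvectorUnitary : Matrix (Fin n) (Fin n) ℂ))
  else A

/-- Metric geometric mean `A # B = A^{1/2} (A^{-1/2} B A^{-1/2})^{1/2} A^{1/2}`. -/
noncomputable def geomMean {n : ℕ} (A B : Matrix (Fin n) (Fin n) ℂ) :
    Matrix (Fin n) (Fin n) ℂ :=
  mpow A (1/2) * mpow (mpow A (-(1/2)) * B * mpow A (-(1/2))) (1/2) * mpow A (1/2)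

/-- Weighted spectral geometric mean `A ♮_t B = (A⁻¹ # B)^t A (A⁻¹ # B)^t`. -/
noncomputable def spectralMean {n : ℕ} (t : ℝ) (A B : Matrix (Fin n) (Fin n) ℂ) :
    Matrix (Fin n) (Fin n) ℂ :=
  mpow (geomMean A⁻¹ B) t * A * mpow (geomMean A⁻¹ B) t

/-- The tolerance relation `A ∼ B`: there are `a, b > 0` with
`√(ab) = det(A⁻¹B)^{1/m}` and `σ(A⁻¹B) = {a, b}`. -/
def tolRel {m : ℕ} (A B : Matrix (Fin m) (Fin m) ℂ) : Prop :=
  ∃ a b : ℝ, 0 < a ∧ 0 < b ∧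
    (Real.sqrt (a * b) : ℂ) = (A⁻¹ * B).det ^ ((1 : ℂ) / (m : ℂ)) ∧
    spectrum ℂ (A⁻¹ * B) = {(a : ℂ), (b : ℂ)}

/-!
Put `M = A^{1/2} B A^{1/2}`; it is similar to `A B`, so its spectrum lies in `{a, b}`. On `{a, b}`
the square root agrees with the affine map `x ↦ (x + √(ab)) / (√a + √b)`, hence
`M^{1/2} = (M + c I) / (√a + √b)` with `c = √(ab) = (αβ)^{1/m}`. Conjugating back,
`A⁻¹ # B = (c / (√a + √b)) (A⁻¹ + c⁻¹ B)`, whose `t`-th power is `(c / (√a + √b))^t` times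
`(A⁻¹ + c⁻¹ B)^t`. The same identity shows that `c I + A B` is similar to `(√a + √b) M^{1/2}`, so
`det (c I + A B) = (√a + √b)^m (αβ)^{1/2}`, which turns the scalar of the claim into
`(c / (√a + √b))^{2t}`.
-/

section MatrixPower

variable {n : ℕ} {X : Matrix (Fin n) (Fin n) ℂ}

lemma mpow_eq_cfc (hX : X.IsHermitian) (t : ℝ) : mpow X t = cfc (fun x : ℝ => x ^ t) X := by
  rw [mpow, dif_pos hX, hX.cfc_eq, IsHermitian.cfc, Unitary.conjStarAlgAut_apply]
  rfl

lemma Matrix.PosSemidef.spectrum_real_nonneg (hX : X.PosSemidef) {x : ℝ}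
    (hx : x ∈ spectrum ℝ X) : 0 ≤ x := by
  obtain ⟨i, rfl⟩ := hX.1.spectrum_real_eq_range_eigenvalues ▸ hx
  exact hX.eigenvalues_nonneg i

lemma Matrix.PosDef.spectrum_real_pos (hX : X.PosDef) {x : ℝ} (hx : x ∈ spectrum ℝ X) :
    0 < x := by
  obtain ⟨i, rfl⟩ := hX.1.spectrum_real_eq_range_eigenvalues ▸ hx
  exact hX.eigenvalues_pos i

lemma mpow_isHermitian (hX : X.IsHermitian) (t : ℝ) : (mpow X t).IsHermitian :=
  mpow_eq_cfc hX t ▸ cfc_predicate _ X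

lemma mpow_zero (hX : X.IsHermitian) : mpow X 0 = 1 := by
  simp [mpow_eq_cfc hX, cfc_const_one ℝ X]

lemma mpow_one (hX : X.IsHermitian) : mpow X 1 = X := by
  simp [mpow_eq_cfc hX, cfc_id' ℝ X hX.isSelfAdjoint]

lemma mpow_mul_mpow (hX : X.PosDef) (s t : ℝ) : mpow X s * mpow X t = mpow X (s + t) := by
  rw [mpow_eq_cfc hX.1, mpow_eq_cfc hX.1, mpow_eq_cfc hX.1,
    ← cfc_mul _ _ X (X.finite_real_spectrum.continuousOn _) (X.finite_real_spectrum.continuousOn _)]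
  exact cfc_congr fun x hx => (Real.rpow_add (hX.spectrum_real_pos hx) s t).symm

lemma mpow_neg_one (hX : X.PosDef) : mpow X (-1) = X⁻¹ := by
  refine (inv_eq_left_inv ?_).symm
  nth_rw 2 [← mpow_one hX.1]
  rw [mpow_mul_mpow hX]
  norm_num [mpow_zero hX.1]

lemma mpow_half_mul_self (hX : X.PosDef) : mpow X (1/2) * mpow X (1/2) = X := by
  rw [mpow_mul_mpow hX]
  norm_num [mpow_one hX.1]

lemma mpow_neg_half_mul_self (hX : X.PosDef) : mpow X (-(1/2)) * mpow X (-(1/2)) = X⁻¹ := by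
  rw [mpow_mul_mpow hX, ← mpow_neg_one hX]
  norm_num

lemma mpow_neg_half_mul_mpow_half (hX : X.PosDef) : mpow X (-(1/2)) * mpow X (1/2) = 1 := by
  rw [mpow_mul_mpow hX]
  norm_num [mpow_zero hX.1]

lemma mpow_half_mul_mpow_neg_half (hX : X.PosDef) : mpow X (1/2) * mpow X (-(1/2)) = 1 := by
  rw [mpow_mul_mpow hX]
  norm_num [mpow_zero hX.1]

lemma mpow_smul (hX : X.PosSemidef) {r : ℝ} (hr : 0 ≤ r) (t : ℝ) :
    mpow (r • X) t = r ^ t • mpow X t := by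
  have hX' : IsSelfAdjoint X := hX.1
  rw [mpow_eq_cfc (hX.1.smul (IsSelfAdjoint.all r)), mpow_eq_cfc hX.1,
    ← cfc_comp_smul r _ X ((X.finite_real_spectrum.image _).continuousOn _),
    ← cfc_const_mul _ _ X (X.finite_real_spectrum.continuousOn _)]
  exact cfc_congr fun x hx => Real.mul_rpow hr (hX.spectrum_real_nonneg hx)

lemma det_mpow (hX : X.PosSemidef) {δ : ℝ} (hδ : X.det = δ) (t : ℝ) :
    (mpow X t).det = ((δ ^ t : ℝ) : ℂ) := by
  have hU := hX.1.eigenvectorUnitary.2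
  have hδ' : δ = ∏ i, hX.1.eigenvalues i := by
    apply Complex.ofReal_injective
    simpa [← hδ] using hX.1.det_eq_prod_eigenvalues
  rw [mpow, dif_pos hX.1, det_mul, det_mul, mul_right_comm, ← det_mul,
    Unitary.mul_star_self_of_mem hU, det_one, one_mul, det_diagonal, hδ',
    ← Real.finsetProd_rpow _ _ fun i _ => hX.eigenvalues_nonneg i]
  push_cast
  rfl

lemma sqrt_mul_sqrt_add_sqrt {a b x : ℝ} (ha : 0 ≤ a) (hb : 0 ≤ b) (hx : x = a ∨ x = b) :
    √x * (√a + √b) = x + √(a * b) := by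
  rw [Real.sqrt_mul ha]
  rcases hx with rfl | rfl
  · rw [mul_add, Real.mul_self_sqrt ha]
  · rw [mul_add, Real.mul_self_sqrt hb]
    ring

lemma mpow_half_of_spectrum_subset_pair (hX : X.IsHermitian) {a b : ℝ} (ha : 0 < a) (hb : 0 < b)
    (h : spectrum ℝ X ⊆ {a, b}) :
    mpow X (1/2) = (√a + √b)⁻¹ • (X + √(a * b) • 1) := by
  have hs : √a + √b ≠ 0 := by positivity
  rw [mpow_eq_cfc hX, ← cfc_id' ℝ X hX.isSelfAdjoint, ← Algebra.algebraMap_eq_smul_one,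
    ← cfc_const (√(a * b)) X, ← cfc_add .., ← cfc_const_mul .., cfc_id' ℝ X hX.isSelfAdjoint]
  refine cfc_congr fun x hx => ?_
  rw [← Real.sqrt_eq_rpow, ← sqrt_mul_sqrt_add_sqrt ha.le hb.le (h hx)]
  field_simp

end MatrixPower

lemma spectrum_mul_mul_of_mul_eq_one {R A : Type*} [CommSemiring R] [Ring A] [Algebra R A]
    {P Q : A} (h₁ : P * Q = 1) (h₂ : Q * P = 1) (X : A) :
    spectrum R (P * X * Q) = spectrum R X :=
  spectrum.units_conjugate (u := ⟨P, Q, h₁, h₂⟩)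

lemma det_mul_mul_of_mul_eq_one {n R : Type*} [Fintype n] [DecidableEq n] [CommRing R]
    {P Q : Matrix n n R} (h : P * Q = 1) (X : Matrix n n R) : (P * X * Q).det = X.det := by
  rw [det_mul, det_mul, mul_right_comm, ← det_mul, h, det_one, one_mul]

section TwoPointSpectrum

variable {m : ℕ} {A B : Matrix (Fin m) (Fin m) ℂ} {a b : ℝ}

/- `mpow A⁻¹ (-(1/2))` is `A^{1/2}`, written the way it enters `geomMean A⁻¹ B`. -/

lemma mul_eq_conj_mpow_inv (hA : A.PosDef) (B : Matrix (Fin m) (Fin m) ℂ) :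
    A * B = mpow A⁻¹ (-(1/2)) * (mpow A⁻¹ (-(1/2)) * B * mpow A⁻¹ (-(1/2))) *
      mpow A⁻¹ (1/2) := by
  have hAA := mpow_neg_half_mul_self hA.inv
  rw [nonsing_inv_nonsing_inv A ((isUnit_iff_isUnit_det A).mp hA.isUnit)] at hAA
  calc A * B = (mpow A⁻¹ (-(1/2)) * mpow A⁻¹ (-(1/2))) * B *
        (mpow A⁻¹ (-(1/2)) * mpow A⁻¹ (1/2)) := by
        rw [hAA, mpow_neg_half_mul_mpow_half hA.inv, mul_one]
    _ = _ := by simp only [mul_assoc]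

lemma spectrum_real_conj_mpow_inv_subset (hA : A.PosDef)
    (h : spectrum ℂ (A * B) ⊆ {(a : ℂ), (b : ℂ)}) :
    spectrum ℝ (mpow A⁻¹ (-(1/2)) * B * mpow A⁻¹ (-(1/2))) ⊆ {a, b} := by
  intro x hx
  have hx' : (x : ℂ) ∈ spectrum ℂ (A * B) := by
    rw [mul_eq_conj_mpow_inv hA B, spectrum_mul_mul_of_mul_eq_one
      (mpow_neg_half_mul_mpow_half hA.inv) (mpow_half_mul_mpow_neg_half hA.inv)]
    exact (spectrum.algebraMap_mem_iff ℂ).mpr hx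
  simpa using h hx'

lemma geomMean_inv_of_spectrum_subset_pair (hA : A.PosDef) (hB : B.IsHermitian)
    (ha : 0 < a) (hb : 0 < b) (h : spectrum ℂ (A * B) ⊆ {(a : ℂ), (b : ℂ)}) :
    geomMean A⁻¹ B = (√a + √b)⁻¹ • (B + √(a * b) • A⁻¹) := by
  have hR := mpow_isHermitian hA.inv.1 (-(1/2))
  have hM : (mpow A⁻¹ (-(1/2)) * B * mpow A⁻¹ (-(1/2))).IsHermitian := by
    have := isHermitian_conjTranspose_mul_mul (mpow A⁻¹ (-(1/2))) hB
    rwa [hR.eq] at this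
  have hB' : mpow A⁻¹ (1/2) * (mpow A⁻¹ (-(1/2)) * B * mpow A⁻¹ (-(1/2))) * mpow A⁻¹ (1/2) = B :=
    calc _ = (mpow A⁻¹ (1/2) * mpow A⁻¹ (-(1/2))) * B *
          (mpow A⁻¹ (-(1/2)) * mpow A⁻¹ (1/2)) := by simp only [mul_assoc]
      _ = B := by
        rw [mpow_half_mul_mpow_neg_half hA.inv, mpow_neg_half_mul_mpow_half hA.inv, one_mul,
          mul_one]
  rw [geomMean, mpow_half_of_spectrum_subset_pair hM ha hb
      (spectrum_real_conj_mpow_inv_subset hA h),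
    mul_smul_comm, smul_mul_assoc, mul_add, add_mul, mul_smul_comm, smul_mul_assoc, mul_one,
    mpow_half_mul_self hA.inv, hB']

lemma det_smul_one_add_mul_of_spectrum_subset_pair (hA : A.PosDef) (hB : B.PosSemidef)
    (ha : 0 < a) (hb : 0 < b) (h : spectrum ℂ (A * B) ⊆ {(a : ℂ), (b : ℂ)}) {δ : ℝ}
    (hδ : (A * B).det = δ) :
    (√(a * b) • 1 + A * B).det = (((√a + √b) ^ m * δ ^ (1/2 : ℝ) : ℝ) : ℂ) := by
  have hR := mpow_isHermitian hA.inv.1 (-(1/2))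
  have hM : (mpow A⁻¹ (-(1/2)) * B * mpow A⁻¹ (-(1/2))).PosSemidef := by
    have := hB.conjTranspose_mul_mul_same (mpow A⁻¹ (-(1/2)))
    rwa [hR.eq] at this
  have hRR' := mpow_neg_half_mul_mpow_half hA.inv
  have hs : √a + √b ≠ 0 := by positivity
  have hsum : √(a * b) • 1 + mpow A⁻¹ (-(1/2)) * B * mpow A⁻¹ (-(1/2)) =
      ((√a + √b : ℝ) : ℂ) • mpow (mpow A⁻¹ (-(1/2)) * B * mpow A⁻¹ (-(1/2))) (1/2) := by
    rw [mpow_half_of_spectrum_subset_pair hM.1 ha hb (spectrum_real_conj_mpow_inv_subset hA h),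
      ← Complex.coe_algebraMap, algebraMap_smul, smul_smul, mul_inv_cancel₀ hs, one_smul,
      add_comm]
  rw [mul_eq_conj_mpow_inv hA B, det_mul_mul_of_mul_eq_one hRR'] at hδ
  rw [mul_eq_conj_mpow_inv hA B]
  calc _ = (mpow A⁻¹ (-(1/2)) * (√(a * b) • 1 + mpow A⁻¹ (-(1/2)) * B * mpow A⁻¹ (-(1/2))) *
        mpow A⁻¹ (1/2)).det := by
        rw [mul_add, add_mul, mul_smul_comm, mul_one, smul_mul_assoc, hRR']
    _ = _ := by
      rw [det_mul_mul_of_mul_eq_one hRR', hsum, det_smul, det_mpow hM hδ, Fintype.card_fin]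
      push_cast
      rfl

end TwoPointSpectrum

lemma rpow_three_div_div_rpow_two_div {p s : ℝ} (hp : 0 < p) (hs : 0 < s) {m : ℕ} (hm : m ≠ 0)
    (t : ℝ) :
    p ^ (3 * t / m) / (s ^ m * p ^ (1/2 : ℝ)) ^ (2 * t / m) =
      (p ^ (1 / m : ℝ) / s) ^ t * (p ^ (1 / m : ℝ) / s) ^ t := by
  have hm' : (m : ℝ) ≠ 0 := Nat.cast_ne_zero.mpr hm
  have h₁ : 0 < s ^ m * p ^ (1/2 : ℝ) := by positivity
  have h₂ : 0 < p ^ (1 / m : ℝ) / s := by positivity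
  rw [Real.rpow_def_of_pos hp, Real.rpow_def_of_pos h₁, Real.rpow_def_of_pos h₂,
    ← Real.exp_sub, ← Real.exp_add, Real.log_mul (by positivity) (by positivity),
    Real.log_div (by positivity) hs.ne', Real.log_pow, Real.log_rpow hp, Real.log_rpow hp]
  congr 1
  field_simp
  ring

theorem spectralMean_of_tolRel {m : ℕ} (hm : 1 ≤ m)
    (A B : Matrix (Fin m) (Fin m) ℂ) (hA : A.PosDef) (hB : B.PosDef)
    (α β : ℝ) (hα : A.det = (α : ℂ)) (hβ : B.det = (β : ℂ))
    (t : ℝ) (htol : tolRel A⁻¹ B) :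
    spectralMean t A B =
      ((α * β) ^ (3 * t / m) /
          ((((α * β) ^ ((1 : ℝ) / m)) • (1 : Matrix (Fin m) (Fin m) ℂ) + A * B).det.re
            ^ (2 * t / m))) •
        (mpow (A⁻¹ + ((α * β) ^ (-(1 : ℝ) / m)) • B) t * A *
          mpow (A⁻¹ + ((α * β) ^ (-(1 : ℝ) / m)) • B) t) := by
  obtain ⟨a, b, ha, hb, hroot, hspec⟩ := htol
  rw [nonsing_inv_nonsing_inv A ((isUnit_iff_isUnit_det A).mp hA.isUnit)] at hroot hspec
  have hαβ : 0 < α * β :=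
    mul_pos (Complex.zero_lt_real.mp (hα ▸ hA.det_pos)) (Complex.zero_lt_real.mp (hβ ▸ hB.det_pos))
  have hdet : (A * B).det = ((α * β : ℝ) : ℂ) := by rw [det_mul, hα, hβ]; push_cast; ring
  set c := (α * β) ^ ((1 : ℝ) / m) with hc_def
  have hc : √(a * b) = c := by
    apply Complex.ofReal_injective
    rw [hroot, hdet, hc_def, Complex.ofReal_cpow hαβ.le]
    push_cast
    rfl
  have hc_inv : (α * β) ^ (-(1 : ℝ) / m) = c⁻¹ := by rw [neg_div, Real.rpow_neg hαβ.le]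
  have hc_pos : 0 < c := by positivity
  have hs : 0 < √a + √b := by positivity
  have hC : (A⁻¹ + c⁻¹ • B).PosDef := hA.inv.add (hB.smul (inv_pos.mpr hc_pos))
  have hG : geomMean A⁻¹ B = (c / (√a + √b)) • (A⁻¹ + c⁻¹ • B) := by
    rw [geomMean_inv_of_spectrum_subset_pair hA hB.1 ha hb hspec.subset, hc]
    match_scalars <;> field_simp [hc_pos.ne']
  have hD := det_smul_one_add_mul_of_spectrum_subset_pair hA hB.posSemidef ha hb hspec.subset hdet
  rw [hc] at hD
  rw [hc_inv, spectralMean, hG, mpow_smul hC.posSemidef (by positivity), hD, Complex.ofReal_re,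
    rpow_three_div_div_rpow_two_div hαβ hs (by omega)]
  simp only [smul_mul_assoc, mul_smul_comm, smul_smul]
  rfl
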